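/- Let d be a complex number, let α = (α_i)_{i≥0} be the arithmetical sequence with α_i = i·d, and let β = (β_i)_{i≥0} be the square sequence with β_i = i². Define D(n) = det(P_{α,β}(n)) for n ≥ 1 and D(0) = 1. Then for every n ≥ 3, D(n) = -d·D(n-2) + 2d²·D(n-3). -/

import Mathlib

open Matrix

/-- Entry `P_{i,j}` of the generalized Pascal triangle associated to sequences `α`, `β`:
`P_{i,0} = α i`, `P_{0,j} = β j`, and `P_{i,j} = P_{i-1,j} + P_{i,j-1}` for `i, j ≥ 1`. -/
def pascalEntry {R : Type*} [CommRing R] (α β : ℕ → R) : ℕ → ℕ → R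
  | i, 0 => α i
  | 0, j + 1 => β (j + 1)
  | i + 1, j + 1 => pascalEntry α β i (j + 1) + pascalEntry α β (i + 1) j

/-- The generalized Pascal triangle `P_{α,β}(n)`. -/
def genPascal {R : Type*} [CommRing R] (α β : ℕ → R) (n : ℕ) :
    Matrix (Fin n) (Fin n) R :=
  Matrix.of fun i j => pascalEntry α β (i : ℕ) (j : ℕ)

/-- The Töplitz matrix `T_{α,β}(n)`: `t_{i,j} = α_{i-j}` if `i ≥ j`, else `β_{j-i}`. -/
def toeplitz {R : Type*} [CommRing R] (α β : ℕ → R) (n : ℕ) :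
    Matrix (Fin n) (Fin n) R :=
  Matrix.of fun i j => if (j : ℕ) ≤ (i : ℕ) then α ((i : ℕ) - (j : ℕ)) else β ((j : ℕ) - (i : ℕ))

/-- The unipotent lower triangular matrix `L(n)` with `L_{i,j} = C(i,j)` for `i ≥ j`. -/
def lowerL (R : Type*) [CommRing R] (n : ℕ) : Matrix (Fin n) (Fin n) R :=
  Matrix.of fun i j => if (j : ℕ) ≤ (i : ℕ) then ((i : ℕ).choose (j : ℕ) : R) else 0

/-- The binomial inverse transform `α̂_i = ∑_{k=0}^{i} (-1)^{i+k} C(i,k) α_k`. -/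
def hatSeq {R : Type*} [CommRing R] (α : ℕ → R) (i : ℕ) : R :=
  ∑ k ∈ Finset.range (i + 1), (-1 : R) ^ (i + k) * (i.choose k : R) * α k

/-- The binomial transform `α̌_i = ∑_{k=0}^{i} C(i,k) α_k`. -/
def checkSeq {R : Type*} [CommRing R] (α : ℕ → R) (i : ℕ) : R :=
  ∑ k ∈ Finset.range (i + 1), (i.choose k : R) * α k

/-!
Both boundary sequences are binomial transforms: `i d = ǎ_i` and `i² = b̌_i` for
`a = (0, d, 0, 0, …)` and `b = (0, 1, 2, 0, …)`. Since `f̌ (i + 1) = f̌ i + (f ∘ succ)ˇ i` and a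
Toeplitz matrix is invariant under shifting both indices, `L T_{a,b} Lᵀ` obeys the Pascal
recurrence with boundary values `ǎ`, `b̌`; hence `P_{α,β}(n) = L(n) T_{a,b}(n) L(n)ᵀ` and
`D(n) = det T_{a,b}(n)`, as `L(n)` is unitriangular. The matrix `T_{a,b}(n)` is banded (`d` below
the diagonal, `1` and `2` on the two diagonals above it), and three cofactor expansions, along
column 0, row 0 and column 0, give the recurrence.
-/

open Finset

variable {R : Type*}

def toeplitzCoeff (a b : ℕ → R) (k l : ℕ) : R :=
  if l ≤ k then a (k - l) else b (l - k)

theorem toeplitzCoeff_add_add (a b : ℕ → R) (k l c : ℕ) :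
    toeplitzCoeff a b (k + c) (l + c) = toeplitzCoeff a b k l := by
  simp [toeplitzCoeff, Nat.add_sub_add_right]

theorem toeplitzCoeff_zero_right (a b : ℕ → R) (k : ℕ) : toeplitzCoeff a b k 0 = a k := by
  simp [toeplitzCoeff]

theorem toeplitzCoeff_zero_left (a b : ℕ → R) (h0 : a 0 = b 0) : toeplitzCoeff a b 0 = b := by
  funext l
  cases l <;> simp [toeplitzCoeff, h0]

variable [CommRing R]

theorem toeplitz_apply (a b : ℕ → R) (n : ℕ) (i j : Fin n) :
    toeplitz a b n i j = toeplitzCoeff a b i j := rfl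

theorem toeplitz_submatrix_of_shift {n n' : ℕ} (a b : ℕ → R) (c : ℕ) (f g : Fin n → Fin n')
    (hf : ∀ i, (f i : ℕ) = i + c) (hg : ∀ j, (g j : ℕ) = j + c) :
    (toeplitz a b n').submatrix f g = toeplitz a b n := by
  ext i j
  simp only [submatrix_apply, toeplitz_apply, hf, hg, toeplitzCoeff_add_add]

theorem checkSeq_zero (f : ℕ → R) : checkSeq f 0 = f 0 := by
  simp [checkSeq]

theorem checkSeq_add (f g : ℕ → R) (i : ℕ) :
    checkSeq (fun k => f k + g k) i = checkSeq f i + checkSeq g i := by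
  simp only [checkSeq, mul_add, sum_add_distrib]

theorem checkSeq_succ (f : ℕ → R) (i : ℕ) :
    checkSeq f (i + 1) = checkSeq f i + checkSeq (fun k => f (k + 1)) i := by
  simpa [checkSeq] using sum_choose_succ_mul (fun k _ => f k) i

theorem checkSeq_eq_sum_range (f : ℕ → R) {i N : ℕ} (hf : ∀ k, N ≤ k → k ≤ i → f k = 0) :
    checkSeq f i = ∑ k ∈ range N, (i.choose k : R) * f k := by
  rcases le_total (i + 1) N with h | h
  · refine sum_subset (range_subset_range.2 h) fun k hkN hki => ?_
    simp only [mem_range, not_lt] at hkN hki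
    simp [Nat.choose_eq_zero_of_lt (Nat.lt_of_succ_le hki)]
  · refine (sum_subset (range_subset_range.2 h) fun k hki hkN => ?_).symm
    simp only [mem_range, not_lt] at hkN hki
    simp [hf k hkN (Nat.le_of_lt_succ hki)]

theorem checkSeq_eq_sum_fin (f : ℕ → R) {i n : ℕ} (hi : i < n) :
    checkSeq f i = ∑ k : Fin n, (i.choose k : R) * f k := by
  rw [Fin.sum_univ_eq_sum_range (fun k => (i.choose k : R) * f k)]
  exact checkSeq_eq_sum_range f fun k hk hki => absurd hi (by omega)

theorem checkSeq_single_one (d : R) : checkSeq (Pi.single 1 d) = fun i : ℕ => (i : R) * d := by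
  funext i
  rw [checkSeq_eq_sum_range _ (N := 2) fun k hk _ => by simp [show k ≠ 1 by omega]]
  simp [sum_range_succ]

theorem checkSeq_single_one_add_single_two :
    checkSeq (Pi.single 1 1 + Pi.single 2 2 : ℕ → R) = fun i : ℕ => (i : R) ^ 2 := by
  funext i
  rw [checkSeq_eq_sum_range _ (N := 3) fun k hk _ => by
    simp [show k ≠ 1 by omega, show k ≠ 2 by omega]]
  have h : 2 * i.choose 2 + i = i ^ 2 := by
    rw [Nat.choose_two_right, Nat.mul_div_cancel' (Nat.even_mul_pred_self i).two_dvd]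
    cases i with
    | zero => rfl
    | succ i => rw [Nat.add_sub_cancel]; ring
  simpa [sum_range_succ, mul_comm] using congrArg (Nat.cast : ℕ → R) ((add_comm _ _).trans h)

theorem pascalEntry_checkSeq (a b : ℕ → R) (h0 : a 0 = b 0) (i j : ℕ) :
    pascalEntry (checkSeq a) (checkSeq b) i j =
      checkSeq (fun k => checkSeq (toeplitzCoeff a b k) j) i := by
  induction i, j using pascalEntry.induct with
  | case1 i => simp [pascalEntry, checkSeq_zero, toeplitzCoeff_zero_right]
  | case2 j => rw [pascalEntry, checkSeq_zero, toeplitzCoeff_zero_left a b h0]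
  | case3 i j ih₁ ih₂ =>
    set G : ℕ → R := fun k => checkSeq (toeplitzCoeff a b k) j
    have hshift : ∀ k, checkSeq (toeplitzCoeff a b (k + 1)) (j + 1) = G (k + 1) + G k := by
      intro k
      simp only [G, checkSeq_succ (toeplitzCoeff a b (k + 1)), toeplitzCoeff_add_add]
    calc pascalEntry (checkSeq a) (checkSeq b) (i + 1) (j + 1)
        = checkSeq (fun k => checkSeq (toeplitzCoeff a b k) (j + 1)) i
            + checkSeq (fun k => G (k + 1) + G k) i := by
          rw [pascalEntry, ih₁, ih₂, checkSeq_add, checkSeq_succ G, add_comm (checkSeq G i)]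
      _ = checkSeq (fun k => checkSeq (toeplitzCoeff a b k) (j + 1)) (i + 1) := by
          simp only [checkSeq_succ _ i, hshift]

theorem lowerL_apply (n : ℕ) (i j : Fin n) : lowerL R n i j = ((i : ℕ).choose j : R) := by
  simp only [lowerL, of_apply]
  split_ifs with h
  · rfl
  · rw [Nat.choose_eq_zero_of_lt (not_le.1 h), Nat.cast_zero]

theorem det_lowerL (n : ℕ) : (lowerL R n).det = 1 := by
  rw [det_of_isLowerTriangular]
  · simp [lowerL_apply]
  · intro i j hij
    simp [lowerL_apply, Nat.choose_eq_zero_of_lt (show (i : ℕ) < j from hij)]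

theorem genPascal_checkSeq (a b : ℕ → R) (h0 : a 0 = b 0) (n : ℕ) :
    genPascal (checkSeq a) (checkSeq b) n = lowerL R n * toeplitz a b n * (lowerL R n)ᵀ := by
  ext i j
  simp only [genPascal, of_apply, pascalEntry_checkSeq a b h0, checkSeq_eq_sum_fin _ i.isLt,
    checkSeq_eq_sum_fin _ j.isLt, mul_apply, transpose_apply, lowerL_apply, toeplitz_apply,
    sum_mul, mul_sum]
  rw [sum_comm]
  exact sum_congr rfl fun _ _ => sum_congr rfl fun _ _ => by ring

theorem det_genPascal_checkSeq (a b : ℕ → R) (h0 : a 0 = b 0) (n : ℕ) :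
    (genPascal (checkSeq a) (checkSeq b) n).det = (toeplitz a b n).det := by
  rw [genPascal_checkSeq a b h0, det_mul, det_mul, det_transpose, det_lowerL, one_mul, mul_one]

theorem det_succ_column_zero_of_eq_zero {n : ℕ} (M : Matrix (Fin (n + 1)) (Fin (n + 1)) R)
    (r : Fin (n + 1)) (h : ∀ i, i ≠ r → M i 0 = 0) :
    M.det = (-1) ^ (r : ℕ) * M r 0 * (M.submatrix r.succAbove Fin.succ).det := by
  rw [det_succ_column_zero, sum_eq_single r (fun i _ hi => by rw [h i hi]; ring) (by simp)]

theorem det_toeplitz_add_three (a b : ℕ → R) (ha : ∀ k, k ≠ 1 → a k = 0)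
    (hb : ∀ k, 3 ≤ k → b k = 0) (m : ℕ) :
    (toeplitz a b (m + 3)).det =
      -(a 1 * b 1) * (toeplitz a b (m + 1)).det + a 1 ^ 2 * b 2 * (toeplitz a b m).det := by
  have h₁ : (toeplitz a b (m + 3)).det =
      -a 1 * ((toeplitz a b (m + 3)).submatrix (Fin.succAbove 1) Fin.succ).det := by
    rw [det_succ_column_zero_of_eq_zero _ 1 fun i hi => ?_]
    · simp [toeplitz_apply, toeplitzCoeff]
    · simp only [toeplitz_apply, Fin.val_zero, toeplitzCoeff_zero_right]
      exact ha _ (Fin.val_ne_iff.2 hi)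
  have h₂ : ((toeplitz a b (m + 3)).submatrix (Fin.succAbove 1) Fin.succ).det =
      b 1 * (toeplitz a b (m + 1)).det - b 2 * ((toeplitz a b (m + 3)).submatrix
        (Fin.succAbove 1 ∘ Fin.succ) (Fin.succ ∘ Fin.succAbove 1)).det := by
    rw [det_succ_row_zero, Fin.sum_univ_succ, Fin.sum_univ_succ, sum_eq_zero fun j _ => ?_]
    · simp [toeplitz_apply, toeplitzCoeff, Nat.mod_eq_of_lt (show 2 < m + 3 by omega)]
      rw [toeplitz_submatrix_of_shift a b 2 _ _ (fun i => by simp) (fun j => by simp)]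
      ring
    · simp [toeplitz_apply, toeplitzCoeff, hb]
  have h₃ : ((toeplitz a b (m + 3)).submatrix
      (Fin.succAbove 1 ∘ Fin.succ) (Fin.succ ∘ Fin.succAbove 1)).det =
      a 1 * (toeplitz a b m).det := by
    rw [det_succ_column_zero_of_eq_zero _ 0 fun i hi => ?_]
    · simp [toeplitz_apply, toeplitzCoeff, Nat.mod_eq_of_lt (show 2 < m + 3 by omega)]
      rw [toeplitz_submatrix_of_shift a b 3 _ _ (fun i => by simp) (fun j => by simp)]
    · simpa [toeplitz_apply, toeplitzCoeff] using ha _ fun h => hi (Fin.ext (by simpa using h))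
  rw [h₁, h₂, h₃]
  ring

/-- for `α_i = i d` and the square sequence `β_i = i²`, the determinants
`D(n) = det(P_{α,β}(n))`, `D(0) = 1`, satisfy `D(n) = -d D(n-2) + 2 d² D(n-3)` for `n ≥ 3`. -/
theorem det_genPascal_square_rec (d : ℂ)
    (D : ℕ → ℂ) (hD0 : D 0 = 1)
    (hD : ∀ m : ℕ, 0 < m →
      D m = (genPascal (fun i => (i : ℂ) * d) (fun i => (i : ℂ) ^ 2) m).det)
    (n : ℕ) (hn : 3 ≤ n) :
    D n = -d * D (n - 2) + 2 * d ^ 2 * D (n - 3) := by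
  obtain ⟨m, rfl⟩ : ∃ m, n = m + 3 := ⟨n - 3, by omega⟩
  set a : ℕ → ℂ := Pi.single 1 d
  set b : ℕ → ℂ := Pi.single 1 1 + Pi.single 2 2
  have hD_toeplitz : ∀ k, D k = (toeplitz a b k).det := by
    intro k
    rcases k.eq_zero_or_pos with rfl | hk
    · rw [hD0, det_isEmpty]
    · rw [hD k hk, ← checkSeq_single_one, ← checkSeq_single_one_add_single_two,
        det_genPascal_checkSeq _ _ (by simp)]
  have ha : ∀ k, k ≠ 1 → a k = 0 := fun k hk => by simp [a, hk]
  have hb : ∀ k, 3 ≤ k → b k = 0 := fun k hk => by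
    simp [b, show k ≠ 1 by omega, show k ≠ 2 by omega]
  obtain ⟨ha₁, hb₁, hb₂⟩ : a 1 = d ∧ b 1 = 1 ∧ b 2 = 2 := by simp [a, b]
  rw [show m + 3 - 2 = m + 1 by omega, Nat.add_sub_cancel, hD_toeplitz, hD_toeplitz,
    hD_toeplitz, det_toeplitz_add_three a b ha hb, ha₁, hb₁, hb₂]
  ring
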